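/- arXiv:2104.07727 — 4 statements merged into one kernel-verified Lean document; each statement's English description precedes it below -/
import Mathlib

section
/- Let k ≥ 2 be an integer. The vector e_A ∈ ℝ^(k+3) whose entry at vertex A equals 1 and whose all other entries equal 0 is the unique PageRank vector of Γ(k) for α = 1; that is, e_A has nonnegative entries summing to 1 and satisfies R_1 e_A = e_A, and any vector with nonnegative entries summing to 1 fixed by R_1 equals e_A. -/
/-- Arc relation of the graph `Γ(k)` on vertex indices `0, ..., k+2`, where
vertex `0` is `C1`, vertex `1` is `C2`, vertex `i+1` is `B_i` for `1 ≤ i ≤ k`,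
and vertex `k+2` is `A`.  `PRadj k j i` holds iff there is an arc from `j` to `i`. -/
def PRadj (k j i : ℕ) : Prop :=
  (j = 0 ∧ (i = 0 ∨ i = 1)) ∨
  (j = 1 ∧ (i = 0 ∨ i = 1 ∨ i = 2)) ∨
  (2 ≤ j ∧ j ≤ k + 1 ∧ (i = 0 ∨ i = 1 ∨ i = j + 1)) ∨
  (j = k + 2 ∧ i = k + 2)

instance (k j i : ℕ) : Decidable (PRadj k j i) := by unfold PRadj; infer_instance

/-- Out-degree of vertex `j` in `Γ(k)`:  `deg(C1) = 2`, `deg(A) = 1`, all others `3`. -/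
def PRdeg (k j : ℕ) : ℕ := if j = 0 then 2 else if j = k + 2 then 1 else 3

/-- The PageRank matrix `R_α` of `Γ(k)`:  entry `(i, j)` is
`α / deg(j) + (1 - α)/(k+3)` if there is an arc from `j` to `i`, and `(1 - α)/(k+3)`
otherwise. -/
noncomputable def PRmat (k : ℕ) (α : ℝ) : Matrix (Fin (k + 3)) (Fin (k + 3)) ℝ :=
  fun i j =>
    if PRadj k j.1 i.1 then α / (PRdeg k j.1 : ℝ) + (1 - α) / ((k : ℝ) + 3)
    else (1 - α) / ((k : ℝ) + 3)

/-- `π` is a PageRank vector of `Γ(k)` for jumping parameter `α`:  it has nonnegative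
entries summing to `1` and satisfies `R_α π = π`. -/
def IsPageRank (k : ℕ) (α : ℝ) (π : Fin (k + 3) → ℝ) : Prop :=
  (∀ v, 0 ≤ π v) ∧ (∑ v, π v = 1) ∧ (PRmat k α).mulVec π = π

/-!
For `α = 1` a fixed vector of `R_1` satisfies `π v = ∑_{u → v} π u / deg u`. Every vertex
`B_{i+1}`, and `B_1`, has a single in-neighbour, so `π` is divided by `3` at each step along
`C2 → B1 → ⋯ → Bk`; the row of `A` reads `π A = π Bk / 3 + π A`, so `π Bk = 0` and the whole chain
vanishes. The row of `C1` then reduces to `π C1 = π C1 / 2`. Hence the fixed vectors of `R_1` are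
the multiples of `e_A`, and the normalisation `∑ π = 1` picks out `e_A` itself.
-/

open Matrix

section

variable {k : ℕ}

lemma PRadj_right_iff_of_two_le_of_le {i : ℕ} (hi : 2 ≤ i) (hik : i ≤ k + 1) (j : ℕ) :
    PRadj k j i ↔ j + 1 = i := by
  unfold PRadj; omega

lemma PRadj_last_right_iff (j : ℕ) : PRadj k j (k + 2) ↔ j = k + 1 ∨ j = k + 2 := by
  unfold PRadj; omega

lemma PRadj_zero_right_iff (j : ℕ) : PRadj k j 0 ↔ j ≤ k + 1 := by
  unfold PRadj; omega

lemma PRadj_last_left_iff (i : ℕ) : PRadj k (k + 2) i ↔ i = k + 2 := by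
  unfold PRadj; omega

lemma PRdeg_eq_three {j : ℕ} (h0 : j ≠ 0) (hA : j ≠ k + 2) : PRdeg k j = 3 := by
  simp [PRdeg, h0, hA]

lemma PRmat_one_apply (i j : Fin (k + 3)) :
    PRmat k 1 i j = if PRadj k j i then (PRdeg k j : ℝ)⁻¹ else 0 := by
  simp [PRmat]

lemma PRmat_one_mulVec_apply (π : Fin (k + 3) → ℝ) (i : Fin (k + 3)) :
    (PRmat k 1 *ᵥ π) i = ∑ j : Fin (k + 3) with PRadj k j.1 i.1, π j / PRdeg k j := by
  simp [Matrix.mulVec, dotProduct, PRmat_one_apply, Finset.sum_filter, div_eq_inv_mul]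

lemma PRmat_one_mulVec_single_last :
    PRmat k 1 *ᵥ Pi.single (Fin.last (k + 2)) 1 = Pi.single (Fin.last (k + 2)) 1 := by
  ext i
  simp [PRmat_one_apply, PRadj_last_left_iff, PRdeg, Pi.single_apply, Fin.ext_iff]

namespace PRmat

variable {π : Fin (k + 3) → ℝ}

lemma fixed_apply_succ (hπ : PRmat k 1 *ᵥ π = π) (i : Fin (k + 2)) (hi0 : i ≠ 0)
    (hik : i ≠ Fin.last (k + 1)) : π i.succ = π i.castSucc / 3 := by
  rw [Fin.ne_iff_vne] at hi0 hik
  simp only [Fin.val_zero, Fin.val_last] at hi0 hik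
  have h_in : ({j : Fin (k + 3) | PRadj k j.1 i.succ.1} : Finset _) = {i.castSucc} := by
    ext j
    simp [PRadj_right_iff_of_two_le_of_le (k := k) (i := i + 1) (by omega) (by omega),
      Fin.ext_iff]
  rw [← congrFun hπ, PRmat_one_mulVec_apply, h_in, Finset.sum_singleton,
    PRdeg_eq_three (by simpa using hi0) (by simp; omega)]
  norm_num

lemma fixed_apply_castSucc_last (hπ : PRmat k 1 *ᵥ π = π) :
    π (Fin.last (k + 1)).castSucc = 0 := by
  have h_in : ({j : Fin (k + 3) | PRadj k j.1 (Fin.last (k + 2)).1} : Finset _) =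
      {(Fin.last (k + 1)).castSucc, Fin.last (k + 2)} := by
    ext j
    simp [PRadj_last_right_iff, Fin.ext_iff]
  have h_row := congrFun hπ (Fin.last (k + 2))
  rw [PRmat_one_mulVec_apply, h_in, Finset.sum_pair (by simp [Fin.ext_iff])] at h_row
  simpa [PRdeg] using h_row

lemma fixed_apply_eq_zero_of_ne_zero_of_ne_last (hπ : PRmat k 1 *ᵥ π = π) (i : Fin (k + 3))
    (hi0 : i ≠ 0) (hiA : i ≠ Fin.last (k + 2)) : π i = 0 := by
  induction i using Fin.reverseInduction with
  | last => exact absurd rfl hiA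
  | cast i ih =>
    by_cases hiB : i = Fin.last (k + 1)
    · exact hiB ▸ fixed_apply_castSucc_last hπ
    · have h_succ := fixed_apply_succ hπ i (by rintro rfl; exact hi0 rfl) hiB
      rw [ih (Fin.succ_ne_zero i) (by simpa using hiB)] at h_succ
      linarith

lemma fixed_apply_zero (hπ : PRmat k 1 *ᵥ π = π) : π 0 = 0 := by
  have h_row := congrFun hπ 0
  rw [PRmat_one_mulVec_apply, Finset.sum_eq_single 0] at h_row
  · simp [PRdeg] at h_row
    linarith
  · intro j hj hj0
    rw [fixed_apply_eq_zero_of_ne_zero_of_ne_last hπ j hj0, zero_div]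
    rintro rfl
    simp [PRadj_zero_right_iff] at hj
  · simp [PRadj_zero_right_iff]

lemma fixed_apply_eq_zero_of_ne_last (hπ : PRmat k 1 *ᵥ π = π) (i : Fin (k + 3))
    (hiA : i ≠ Fin.last (k + 2)) : π i = 0 := by
  by_cases hi0 : i = 0
  · exact hi0 ▸ fixed_apply_zero hπ
  · exact fixed_apply_eq_zero_of_ne_zero_of_ne_last hπ i hi0 hiA

end PRmat

end

theorem pagerank_alpha_one_unique_general (k : ℕ) :
    IsPageRank k 1 (fun v => if v.1 = k + 2 then (1 : ℝ) else 0) ∧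
    ∀ π : Fin (k + 3) → ℝ, IsPageRank k 1 π →
      π = fun v => if v.1 = k + 2 then (1 : ℝ) else 0 := by
  have h_single : (fun v : Fin (k + 3) => if v.1 = k + 2 then (1 : ℝ) else 0) =
      Pi.single (Fin.last (k + 2)) 1 := by
    ext v
    simp [Pi.single_apply, Fin.ext_iff]
  rw [h_single]
  refine ⟨⟨fun v => ?_, by simp, PRmat_one_mulVec_single_last⟩, ?_⟩
  · by_cases hv : v = Fin.last (k + 2) <;> simp [hv]
  rintro π ⟨-, h_sum, hπ⟩
  have hA : π (Fin.last (k + 2)) = 1 := by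
    rwa [Fintype.sum_eq_single _ fun i hi => PRmat.fixed_apply_eq_zero_of_ne_last hπ i hi] at h_sum
  ext i
  by_cases hi : i = Fin.last (k + 2)
  · simp [hi, hA]
  · simp [hi, PRmat.fixed_apply_eq_zero_of_ne_last hπ i hi]

/-- For `k ≥ 2`, the vector with value `1` at `A` and `0` elsewhere is the unique
PageRank vector of `Γ(k)` for `α = 1`. -/
theorem pagerank_alpha_one_unique (k : ℕ) (hk : 2 ≤ k) :
    IsPageRank k 1 (fun v => if v.1 = k + 2 then (1 : ℝ) else 0) ∧
    ∀ π : Fin (k + 3) → ℝ, IsPageRank k 1 π →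
      π = fun v => if v.1 = k + 2 then (1 : ℝ) else 0 :=
  pagerank_alpha_one_unique_general k
end

section
/- Let k ≥ 2 be an integer and let π be the PageRank vector of Γ(k) for α = 1 − 1/k. Then π_{C1} = π_{C2}. -/
/-! `C1` and `C2` have the same in-neighbours (every vertex except `A`), and an entry of `R_α`
depends only on its column and on whether there is an arc from the column vertex to the row
vertex. So the rows of `R_α` at `C1` and `C2` coincide, and `π = R_α π` takes equal values there,
whatever `α` is. -/

theorem Matrix.apply_eq_apply_of_mulVec_eq_self_of_row_eq {n R : Type*} [Fintype n]
    [NonUnitalNonAssocSemiring R] {M : Matrix n n R} {v : n → R} (hv : M.mulVec v = v)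
    {i j : n} (hij : M i = M j) : v i = v j := by
  rw [← congrFun hv i, ← congrFun hv j]
  exact congrArg (· ⬝ᵥ v) hij

theorem PRadj_zero_iff_one (k j : ℕ) : PRadj k j 0 ↔ PRadj k j 1 := by
  unfold PRadj
  omega

theorem PRmat_row_zero_eq_row_one (k : ℕ) (α : ℝ) :
    PRmat k α ⟨0, by simp⟩ = PRmat k α ⟨1, by simp⟩ := by
  funext j
  simp only [PRmat, PRadj_zero_iff_one]

/-- For `k ≥ 2` and `α = 1 - 1/k`, the PageRank vector satisfies `π_{C1} = π_{C2}`. -/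
theorem pagerank_C1_eq_C2 (k : ℕ) (π : Fin (k + 3) → ℝ)
    (hπ : IsPageRank k (1 - 1 / (k : ℝ)) π) :
    π ⟨0, by omega⟩ = π ⟨1, by omega⟩ :=
  Matrix.apply_eq_apply_of_mulVec_eq_self_of_row_eq hπ.2.2 (PRmat_row_zero_eq_row_one k _)
end

section
/- Let k ≥ 2 be an integer and let π be the PageRank vector of Γ(k) for α = 1 − 1/k. Then ∑_{i=1}^{k} π_{Bi} < (π_{C2}/6 + 5·π_{C2}/(6k)) · 3/(1 − 1/k). -/
/-!
The rows of `R_α` at `C1` and `C2` coincide (both vertices have in-neighbours `C1`, `C2` and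
all `Bi`), so `π_{C1} = π_{C2} =: p`. The balance equation at `C2`, with `∑ π = 1`, reads
`p = α (p/2 + p/3 + S/3) + (1 - α)/(k+3)` for `S = ∑ π_{Bi}`, i.e.
`α S = 3 ((1 - 5α/6) p - (1 - α)/(k+3))`. For `α = 1 - 1/k` we have
`1 - 5α/6 = 1/6 + 5/(6k)`, and the teleportation term `(1 - α)/(k+3)` is positive.
-/

section

variable {k : ℕ}

abbrev vertexB (i : Fin k) : Fin (k + 3) :=
  ⟨i.1 + 2, Nat.lt_succ_of_lt (Nat.add_lt_add_right i.2 2)⟩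

noncomputable def PRinflow (k : ℕ) (π : Fin (k + 3) → ℝ) (i : Fin (k + 3)) : ℝ :=
  ∑ j, if PRadj k j.1 i.1 then π j / PRdeg k j.1 else 0

theorem sum_fin_add_three {M : Type*} [AddCommMonoid M] (f : Fin (k + 3) → M) :
    ∑ v, f v = f ⟨0, by omega⟩ + f ⟨1, by omega⟩ +
      (∑ i : Fin k, f (vertexB i)) + f ⟨k + 2, by omega⟩ := by
  rw [Fin.sum_univ_succ, Fin.sum_univ_succ, Fin.sum_univ_castSucc]
  simp only [add_assoc]
  rfl

theorem PRmat_mulVec_apply (α : ℝ) (π : Fin (k + 3) → ℝ) (i : Fin (k + 3)) :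
    (PRmat k α).mulVec π i = α * PRinflow k π i + (1 - α) / (k + 3) * ∑ j, π j := by
  simp only [Matrix.mulVec, dotProduct, PRmat, PRinflow, Finset.mul_sum,
    ← Finset.sum_add_distrib]
  refine Finset.sum_congr rfl fun j _ => ?_
  split_ifs <;> ring

theorem PRinflow_of_val_lt_two (π : Fin (k + 3) → ℝ) (i : Fin (k + 3)) (hi : i.1 < 2) :
    PRinflow k π i =
      π ⟨0, by omega⟩ / 2 + π ⟨1, by omega⟩ / 3 + (∑ j : Fin k, π (vertexB j)) / 3 := by
  have hB : ∀ j : Fin k, PRadj k (j.1 + 2) i ∧ PRdeg k (j.1 + 2) = 3 := fun j => by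
    have := j.2
    exact ⟨by unfold PRadj; omega, by unfold PRdeg; rw [if_neg (by omega), if_neg (by omega)]⟩
  rw [PRinflow, sum_fin_add_three, Finset.sum_div,
    if_pos (show PRadj k 0 i.1 by unfold PRadj; omega),
    if_pos (show PRadj k 1 i.1 by unfold PRadj; omega),
    if_neg (show ¬PRadj k (k + 2) i.1 by unfold PRadj; omega),
    Finset.sum_congr rfl fun j _ => by rw [if_pos (hB j).1, (hB j).2]]
  simp [PRdeg]

theorem IsPageRank.apply_of_val_lt_two {α : ℝ} {π : Fin (k + 3) → ℝ}
    (hπ : IsPageRank k α π) (i : Fin (k + 3)) (hi : i.1 < 2) :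
    π i = α * (π ⟨0, by omega⟩ / 2 + π ⟨1, by omega⟩ / 3 +
        (∑ j : Fin k, π (vertexB j)) / 3) + (1 - α) / (k + 3) := by
  obtain ⟨-, hsum, hfix⟩ := hπ
  have hrow := congrFun hfix i
  rw [PRmat_mulVec_apply, hsum, mul_one, PRinflow_of_val_lt_two π i hi] at hrow
  exact hrow.symm

theorem IsPageRank.mul_sum_vertexB {α : ℝ} {π : Fin (k + 3) → ℝ} (hπ : IsPageRank k α π) :
    α * ∑ j : Fin k, π (vertexB j) =
      3 * ((1 - 5 * α / 6) * π ⟨1, by omega⟩ - (1 - α) / (k + 3)) := by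
  have hC1 := hπ.apply_of_val_lt_two ⟨0, by omega⟩ (by simp)
  have hC2 := hπ.apply_of_val_lt_two ⟨1, by omega⟩ (by simp)
  rw [hC1.trans hC2.symm] at hC2
  linarith

end

/-- For `k ≥ 2` and `α = 1 - 1/k`, the PageRank vector satisfies
`∑_{i=1}^k π_{Bi} < (π_{C2}/6 + 5·π_{C2}/(6k)) · 3/(1 - 1/k)`. -/
theorem pagerank_sum_Bi_upper_bound (k : ℕ) (hk : 2 ≤ k) (π : Fin (k + 3) → ℝ)
    (hπ : IsPageRank k (1 - 1 / (k : ℝ)) π) :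
    (∑ i : Fin k, π ⟨i.1 + 2, by omega⟩) <
      (π ⟨1, by omega⟩ / 6 + 5 * π ⟨1, by omega⟩ / (6 * (k : ℝ))) * 3
        / (1 - 1 / (k : ℝ)) := by
  have hk' : (2 : ℝ) ≤ k := by exact_mod_cast hk
  have hα : 0 < 1 - 1 / (k : ℝ) := by
    rw [sub_pos, div_lt_one (by linarith)]; linarith
  have hteleport : 0 < (1 - (1 - 1 / (k : ℝ))) / (k + 3) := by
    rw [sub_sub_cancel]; positivity
  have hcoeff : (π ⟨1, by omega⟩ / 6 + 5 * π ⟨1, by omega⟩ / (6 * (k : ℝ))) * 3 =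
      3 * ((1 - 5 * (1 - 1 / (k : ℝ)) / 6) * π ⟨1, by omega⟩) := by
    field_simp; ring
  rw [lt_div_iff₀ hα, mul_comm, hπ.mul_sum_vertexB, hcoeff]
  linarith
end

section
/- Let k ≥ 2 be an integer and let π be the PageRank vector of Γ(k) for α = 1 − 1/k. Then for every i with 1 ≤ i ≤ k, π_{Bi} < ((1 − 1/k)/3)^i · π_{C2} + 3/(2k(k+3)). -/
/-!
The PageRank equation at `B_i` (with `B_0 = C2`) reads `π_{B_i} = (α/3) π_{B_{i-1}} + (1-α)/n`, since
`B_{i-1}` is the only in-neighbour of `B_i` and has out-degree `3`. Hence the chain `C2, B_1, …, B_k`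
follows an affine recurrence `x_{n+1} = a x_n + d`, and any `c ≥ 0` with `a c + d < c` bounds
`x_n - a^n x_0` strictly from `n = 1` on. For `α = 1 - 1/k` the constant `c = 3/(2k(k+3))` works.
-/

theorem lt_pow_mul_add_of_affine_recurrence {a c d : ℝ} {x : ℕ → ℝ} {m : ℕ} (ha : 0 ≤ a)
    (hc : 0 ≤ c) (hacd : a * c + d < c) (hx : ∀ n < m, x (n + 1) = a * x n + d) :
    ∀ n < m, x (n + 1) < a ^ (n + 1) * x 0 + c := by
  have hle : ∀ n ≤ m, x n ≤ a ^ n * x 0 + c := by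
    intro n hn
    induction n with
    | zero => simpa using hc
    | succ n ih =>
      have := mul_le_mul_of_nonneg_left (ih (by omega)) ha
      rw [hx n (by omega), pow_succ', mul_assoc]
      linarith [mul_add a (a ^ n * x 0) c]
  intro n hn
  have := mul_le_mul_of_nonneg_left (hle n hn.le) ha
  rw [hx n hn, pow_succ', mul_assoc]
  linarith [mul_add a (a ^ n * x 0) c]

theorem PRmat_apply (k : ℕ) (α : ℝ) (i j : Fin (k + 3)) :
    PRmat k α i j = (1 - α) / ((k : ℝ) + 3) + if PRadj k j i then α / (PRdeg k j : ℝ) else 0 := by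
  unfold PRmat
  split_ifs <;> ring

theorem PRadj_add_two_iff {k n j : ℕ} (hn : n < k) : PRadj k j (n + 2) ↔ j = n + 1 := by
  unfold PRadj
  omega

theorem PRdeg_add_one {k n : ℕ} (hn : n ≤ k) : PRdeg k (n + 1) = 3 := by
  unfold PRdeg
  rw [if_neg (by omega), if_neg (by omega)]

theorem PRmat_mulVec_add_two (k : ℕ) (α : ℝ) (π : Fin (k + 3) → ℝ) {n : ℕ} (hn : n < k) :
    (PRmat k α).mulVec π ⟨n + 2, by omega⟩ =
      α / 3 * π ⟨n + 1, by omega⟩ + (1 - α) / ((k : ℝ) + 3) * ∑ v, π v := by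
  have hn' : n + 1 < k + 3 := by omega
  have hadj (j : Fin (k + 3)) : PRadj k j (n + 2) ↔ j = ⟨n + 1, hn'⟩ := by
    rw [PRadj_add_two_iff hn, Fin.ext_iff]
  simp only [Matrix.mulVec, dotProduct, PRmat_apply, hadj, add_mul, Finset.sum_add_distrib,
    ite_mul, zero_mul, Finset.sum_ite_eq', Finset.mem_univ, if_true, ← Finset.mul_sum]
  rw [PRdeg_add_one hn.le, Nat.cast_ofNat]
  ring

theorem IsPageRank.apply_add_two {k : ℕ} {α : ℝ} {π : Fin (k + 3) → ℝ} (hπ : IsPageRank k α π)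
    {n : ℕ} (hn : n < k) :
    π ⟨n + 2, by omega⟩ = α / 3 * π ⟨n + 1, by omega⟩ + (1 - α) / ((k : ℝ) + 3) := by
  obtain ⟨-, hsum, hfix⟩ := hπ
  rw [← congrFun hfix, PRmat_mulVec_add_two k α π hn, hsum, mul_one]

/-- For `k ≥ 2` and `α = 1 - 1/k`, the PageRank vector satisfies
`π_{Bi} < ((1 - 1/k)/3)^i · π_{C2} + 3/(2k(k+3))` for all `1 ≤ i ≤ k`. -/
theorem pagerank_Bi_upper_bound (k : ℕ) (π : Fin (k + 3) → ℝ)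
    (hπ : IsPageRank k (1 - 1 / (k : ℝ)) π) :
    ∀ i : ℕ, ∀ _hi1 : 1 ≤ i, ∀ _hik : i ≤ k,
      π ⟨i + 1, by omega⟩ <
        ((1 - 1 / (k : ℝ)) / 3) ^ i * π ⟨1, by omega⟩
          + 3 / (2 * (k : ℝ) * ((k : ℝ) + 3)) := by
  rintro i hi hik
  obtain ⟨n, rfl⟩ : ∃ n, i = n + 1 := ⟨i - 1, by omega⟩
  have hk : (1 : ℝ) ≤ k := by exact_mod_cast (by omega : 1 ≤ k)
  let x : ℕ → ℝ := fun n => if h : n + 1 < k + 3 then π ⟨n + 1, h⟩ else 0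
  have hx_apply {n : ℕ} (hn : n ≤ k) : x n = π ⟨n + 1, by omega⟩ := dif_pos (by omega)
  have hx : ∀ n < k,
      x (n + 1) = (1 - 1 / (k : ℝ)) / 3 * x n + (1 - (1 - 1 / (k : ℝ))) / (k + 3) := by
    intro n hn
    rw [hx_apply hn, hx_apply hn.le]
    exact hπ.apply_add_two hn
  have ha : 0 ≤ (1 - 1 / (k : ℝ)) / 3 := by
    linarith [one_div (k : ℝ) ▸ inv_le_one_of_one_le₀ hk]
  have hacd : (1 - 1 / (k : ℝ)) / 3 * (3 / (2 * k * (k + 3))) + (1 - (1 - 1 / (k : ℝ))) / (k + 3)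
      < 3 / (2 * k * (k + 3)) := by
    -- times `2k(k+3)` this reads `(1 - 1/k) + 2 < 3`
    rw [← sub_pos]
    field_simp
    ring_nf
    positivity
  have := lt_pow_mul_add_of_affine_recurrence ha (by positivity) hacd hx n (by omega)
  rwa [hx_apply (by omega), hx_apply k.zero_le] at this
end
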